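/- Let 1 ≤ k ≤ n with k ≥ n−k+1, and let J_{k,n} = ⟨ x_i x_{i+1} ⋯ x_{i+k−1} : 1 ≤ i ≤ n−k+1 ⟩ ⊆ k[x_1,…,x_n] be the consecutive k-out-of-n ideal. Then C_i(J_{k,n}) = {i, i+1, …, k} for 1 ≤ i ≤ n−k, C_i(J_{k,n}) = {n−k+1, …, k} for n−k+1 ≤ i ≤ k, and C_i(J_{k,n}) = {n−k+1, …, i} for k+1 ≤ i ≤ n. -/
import Mathlib


open MvPolynomial

/-- The squarefree monomial with support `s`: `∏_{j ∈ s} x_j`. -/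
noncomputable def sfMon (𝕜 : Type) [Field 𝕜] {σ : Type} (s : Finset σ) : MvPolynomial σ 𝕜 :=
  ∏ j ∈ s, X j

/-- The supports of the minimal monomial generating set `G(I)` of a squarefree monomial
ideal `I`: supports `s` of squarefree monomials in `I` no proper (squarefree) divisor of which
lies in `I`. -/
def sqfreeMinGens {𝕜 : Type} [Field 𝕜] {σ : Type} (I : Ideal (MvPolynomial σ 𝕜)) :
    Set (Finset σ) :=
  { s | sfMon 𝕜 s ∈ I ∧ ∀ t : Finset σ, t ⊂ s → sfMon 𝕜 t ∉ I }

/-- `C_i(I) = ⋂ { supp m : m ∈ G(I), x_i ∣ m }`. -/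
def suppC {𝕜 : Type} [Field 𝕜] {σ : Type} (I : Ideal (MvPolynomial σ 𝕜)) (i : σ) : Set σ :=
  ⋂ s ∈ { s | s ∈ sqfreeMinGens I ∧ i ∈ s }, (s : Set σ)


noncomputable def dOf {σ : Type} [DecidableEq σ] (s : Finset σ) : σ →₀ ℕ :=
  ∑ j ∈ s, Finsupp.single j 1

lemma dOf_apply {σ : Type} [DecidableEq σ] (s : Finset σ) (a : σ) :
    dOf s a = if a ∈ s then 1 else 0 := by
  classical
  simp [dOf, Finsupp.finset_sum_apply, Finsupp.single_apply, Finset.sum_ite_eq' s a (fun _ => 1)]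

lemma dOf_le_iff {σ : Type} [DecidableEq σ] (g s : Finset σ) : dOf g ≤ dOf s ↔ g ⊆ s := by
  constructor
  · intro h a ha
    have := h a
    simp [dOf_apply, ha] at this
    by_contra hb
    simp [hb] at this
  · intro h a
    simp only [dOf_apply]
    by_cases ha : a ∈ g
    · simp [ha, h ha]
    · simp [ha]

lemma sfMon_eq_monomial (𝕜 : Type) [Field 𝕜] {σ : Type} [DecidableEq σ] (s : Finset σ) :
    sfMon 𝕜 s = monomial (dOf s) 1 := by
  classical
  induction s using Finset.induction with
  | empty => simp [sfMon, dOf]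
  | @insert a s ha ih =>
    rw [sfMon, Finset.prod_insert ha, ← sfMon, ih]
    rw [show dOf (insert a s) = Finsupp.single a 1 + dOf s from Finset.sum_insert ha]
    rw [X, monomial_mul, one_mul]

def Gset (n k i : ℕ) : Finset (Fin n) :=
  Finset.univ.filter (fun t : Fin n => i ≤ t.val + 1 ∧ t.val + 1 < i + k)

lemma mem_Gset {n k i : ℕ} (t : Fin n) :
    t ∈ Gset n k i ↔ i ≤ t.val + 1 ∧ t.val + 1 < i + k := by
  simp [Gset]

lemma mem_J_iff (𝕜 : Type) [Field 𝕜] (n k : ℕ) (s : Finset (Fin n)) :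
    sfMon 𝕜 s ∈ Ideal.span { f : MvPolynomial (Fin n) 𝕜 | ∃ i : ℕ, 1 ≤ i ∧ i ≤ n - k + 1 ∧
        f = sfMon 𝕜 (Gset n k i) } ↔
      ∃ i, 1 ≤ i ∧ i ≤ n - k + 1 ∧ Gset n k i ⊆ s := by
  have hset : { f : MvPolynomial (Fin n) 𝕜 | ∃ i : ℕ, 1 ≤ i ∧ i ≤ n - k + 1 ∧
        f = sfMon 𝕜 (Gset n k i) }
      = (fun d => monomial d (1:𝕜)) ''
        { d | ∃ i, 1 ≤ i ∧ i ≤ n - k + 1 ∧ d = dOf (Gset n k i) } := by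
    ext f
    simp only [Set.mem_setOf_eq, Set.mem_image]
    constructor
    · rintro ⟨i, h1, h2, rfl⟩
      exact ⟨dOf (Gset n k i), ⟨i, h1, h2, rfl⟩, (sfMon_eq_monomial _ _).symm⟩
    · rintro ⟨d, ⟨i, h1, h2, rfl⟩, rfl⟩
      exact ⟨i, h1, h2, (sfMon_eq_monomial _ _).symm⟩
  classical
  rw [hset, sfMon_eq_monomial, mem_ideal_span_monomial_image, support_monomial,
    if_neg (one_ne_zero (α := 𝕜))]
  simp only [Finset.mem_singleton, forall_eq, Set.mem_setOf_eq]
  constructor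
  · rintro ⟨d, ⟨i, h1, h2, rfl⟩, hle⟩
    exact ⟨i, h1, h2, (dOf_le_iff _ _).mp hle⟩
  · rintro ⟨i, h1, h2, hsub⟩
    exact ⟨dOf (Gset n k i), ⟨i, h1, h2, rfl⟩, (dOf_le_iff _ _).mpr hsub⟩

lemma Gset_inj {n k i j : ℕ} (hk : 1 ≤ k) (hkn : k ≤ n)
    (hi1 : 1 ≤ i) (hi2 : i ≤ n - k + 1) (hj1 : 1 ≤ j) (hj2 : j ≤ n - k + 1)
    (h : Gset n k j ⊆ Gset n k i) : j = i := by
  have hlo : (⟨j - 1, by omega⟩ : Fin n) ∈ Gset n k j := by rw [mem_Gset]; simp; omega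
  have hhi : (⟨j + k - 2, by omega⟩ : Fin n) ∈ Gset n k j := by rw [mem_Gset]; simp; omega
  have h1 := (mem_Gset _).mp (h hlo)
  have h2 := (mem_Gset _).mp (h hhi)
  simp only at h1 h2
  omega

lemma sqfreeMinGens_J (𝕜 : Type) [Field 𝕜] (n k : ℕ) (hk : 1 ≤ k) (hkn : k ≤ n)
    (J : Ideal (MvPolynomial (Fin n) 𝕜))
    (hJ : J = Ideal.span { f | ∃ i : ℕ, 1 ≤ i ∧ i ≤ n - k + 1 ∧ f = sfMon 𝕜 (Gset n k i) }) :
    sqfreeMinGens J = { s | ∃ i, 1 ≤ i ∧ i ≤ n - k + 1 ∧ s = Gset n k i } := by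
  subst hJ
  ext s
  simp only [sqfreeMinGens, Set.mem_setOf_eq, mem_J_iff]
  constructor
  · rintro ⟨⟨i, h1, h2, hsub⟩, hmin⟩
    refine ⟨i, h1, h2, ?_⟩
    by_contra hne
    exact hmin (Gset n k i) (hsub.ssubset_of_ne (Ne.symm hne)) ⟨i, h1, h2, subset_rfl⟩
  · rintro ⟨i, h1, h2, rfl⟩
    refine ⟨⟨i, h1, h2, subset_rfl⟩, ?_⟩
    intro t ht hmem
    obtain ⟨j, hj1, hj2, hsub⟩ := hmem
    have hss : Gset n k j ⊂ Gset n k i := hsub.trans_ssubset ht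
    exact hss.ne (congrArg (Gset n k) (Gset_inj hk hkn h1 h2 hj1 hj2 hss.subset))

/-- Support poset of the consecutive `k`-out-of-`n` ideal
`J_{k,n} = ⟨ x_i ⋯ x_{i+k−1} : 1 ≤ i ≤ n−k+1 ⟩` when `k ≥ n−k+1`. The variable `x_i`
(`1 ≤ i ≤ n`) is indexed by `i-1 : Fin n`. Then `C_i = {i,…,k}` for `1 ≤ i ≤ n−k`,
`C_i = {n−k+1,…,k}` for `n−k+1 ≤ i ≤ k`, and `C_i = {n−k+1,…,i}` for `k+1 ≤ i ≤ n`. -/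
theorem stmt14 {𝕜 : Type} [Field 𝕜] (n k : ℕ) (hk : 1 ≤ k) (hkn : k ≤ n)
    (hcase : n - k + 1 ≤ k)
    (J : Ideal (MvPolynomial (Fin n) 𝕜))
    (hJ : J = Ideal.span { f | ∃ i : ℕ, 1 ≤ i ∧ i ≤ n - k + 1 ∧
      f = sfMon 𝕜 (Finset.univ.filter
        (fun t : Fin n => i ≤ t.val + 1 ∧ t.val + 1 < i + k)) }) :
    ∀ t : Fin n,
      (t.val + 1 ≤ n - k →
        suppC J t = { u : Fin n | t.val ≤ u.val ∧ u.val + 1 ≤ k }) ∧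
      (n - k + 1 ≤ t.val + 1 → t.val + 1 ≤ k →
        suppC J t = { u : Fin n | n - k ≤ u.val ∧ u.val + 1 ≤ k }) ∧
      (k + 1 ≤ t.val + 1 →
        suppC J t = { u : Fin n | n - k ≤ u.val ∧ u.val ≤ t.val }) := by
  have hgens := sqfreeMinGens_J 𝕜 n k hk hkn J hJ
  intro t
  have hmem : ∀ u : Fin n, u ∈ suppC J t ↔
      ∀ i : ℕ, 1 ≤ i → i ≤ n - k + 1 → t ∈ Gset n k i → u ∈ Gset n k i := by
    intro u
    simp only [suppC, Set.mem_iInter, Set.mem_setOf_eq, hgens, Finset.coe_insert]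
    constructor
    · intro h i h1 h2 hti
      exact h (Gset n k i) ⟨⟨i, h1, h2, rfl⟩, hti⟩
    · rintro h s ⟨⟨i, h1, h2, rfl⟩, hts⟩
      exact h i h1 h2 hts
  refine ⟨?_, ?_, ?_⟩
  · intro ht
    ext u
    rw [Set.mem_setOf_eq, hmem]
    simp only [mem_Gset]
    constructor
    · intro h
      have hA := h 1 le_rfl (by omega) (by omega)
      have hB := h (t.val + 1) (by omega) (by omega) (by omega)
      omega
    · intro h i h1 h2 hti
      omega
  · intro ht1 ht2
    ext u
    rw [Set.mem_setOf_eq, hmem]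
    simp only [mem_Gset]
    constructor
    · intro h
      have hA := h 1 le_rfl (by omega) (by omega)
      have hB := h (n - k + 1) (by omega) le_rfl (by omega)
      omega
    · intro h i h1 h2 hti
      omega
  · intro ht
    ext u
    rw [Set.mem_setOf_eq, hmem]
    simp only [mem_Gset]
    constructor
    · intro h
      have hA := h (n - k + 1) (by omega) le_rfl (by omega)
      have hB := h (t.val + 2 - k) (by omega) (by omega) (by omega)
      omega
    · intro h i h1 h2 hti
      omega
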